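/- arXiv:2308.15617 — 3 statements merged into one kernel-verified Lean document; each statement's English description precedes it below -/
import Mathlib

section
/- Let H_μ be the hypergraph model obtained from a graph G, a node set S ⊆ V(G), and the collection M of all occurrences of a motif μ having at least one node in S: the nodes of H_μ are S ∪ {r} (where r is the contraction of V \ S), and for each motif occurrence G' = (V', E') ∈ M there is a net equal to V' if V' ⊆ S, and to (V' ∩ S) ∪ {r} otherwise. Then every k-way partition P of H_μ corresponds to a distinct k-way partition P' of G (assigning each node of G in S to the block of its model node, and all nodes of V \ S to the block of r) such that the number of cut nets of P equals the number of motif occurrences of μ cut by P', assuming the motif enumeration is exact. -/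
/-! The contraction `φ` sends every node outside `S` to the single node `r`, so an occurrence
disjoint from `S` lies in one block of `P ∘ φ`. Hence every occurrence cut by `P ∘ φ` touches `S`,
i.e. belongs to `M`, and for those the net `φ '' m` is cut by `P` exactly when `m` is cut by
`P ∘ φ`. -/

theorem Finset.exists_ne_on_image_iff {α β γ : Type*} [DecidableEq β] (f : α → β) (c : β → γ)
    (s : Finset α) :
    (∃ x ∈ s.image f, ∃ y ∈ s.image f, c x ≠ c y) ↔ ∃ a ∈ s, ∃ b ∈ s, c (f a) ≠ c (f b) := by
  simp only [Finset.exists_mem_image]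

theorem Finset.inter_nonempty_of_ne_of_const_compl {α β : Type*} [DecidableEq α] {S m : Finset α}
    {f : α → β} (hf : ∀ a b, a ∉ S → b ∉ S → f a = f b) {a b : α} (ha : a ∈ m) (hb : b ∈ m)
    (hab : f a ≠ f b) : (m ∩ S).Nonempty := by
  by_contra hdisj
  have hout : ∀ x ∈ m, x ∉ S := fun x hx hxS => hdisj ⟨x, Finset.mem_inter.mpr ⟨hx, hxS⟩⟩
  exact hab (hf a b (hout a ha) (hout b hb))

open Classical in
/-- Hypergraph model of local motif clustering: nodes of the model are `S ∪ {r}`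
(`r` being the contraction of the complement of `S`, realized by the map `φ`),
and each motif occurrence touching `S` gives a net equal to its `φ`-image.
Every `k`-way partition `P` of the model corresponds to the partition
`P' = P ∘ φ` of `G`, and the number of cut nets of `P` equals the number of
motif occurrences cut by `P'` (exact enumeration: `M` consists precisely of all
occurrences touching `S`). -/
theorem stmt_5 {V : Type*} [DecidableEq V]
    (S : Finset V) (Mall M : Finset (Finset V))
    (hM : M = Mall.filter (fun m => (m ∩ S).Nonempty))
    (k : ℕ) (P : ({v // v ∈ S} ⊕ Unit) → Fin k)
    (φ : V → ({v // v ∈ S} ⊕ Unit))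
    (hφ : ∀ v, φ v = if h : v ∈ S then Sum.inl ⟨v, h⟩ else Sum.inr ())
    (P' : V → Fin k) (hP' : P' = P ∘ φ) :
    (M.filter (fun m =>
        ∃ x ∈ Finset.image φ m, ∃ y ∈ Finset.image φ m, P x ≠ P y)).card
      = (Mall.filter (fun m => ∃ x ∈ m, ∃ y ∈ m, P' x ≠ P' y)).card := by
  subst hM hP'
  have hconst : ∀ a b, a ∉ S → b ∉ S → (P ∘ φ) a = (P ∘ φ) b := fun a b ha hb => by
    simp only [Function.comp_apply, hφ, dif_neg ha, dif_neg hb]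
  rw [Finset.filter_filter]
  congr 1
  refine Finset.filter_congr fun m _ => ?_
  rw [Finset.exists_ne_on_image_iff]
  exact and_iff_right_of_imp fun ⟨a, ha, b, hb, hab⟩ =>
    Finset.inter_nonempty_of_ne_of_const_compl hconst ha hb hab
end

section
/- Given the hypergraph model H_μ and a 2-way partition P = (C, C̄) of H_μ with the contracted node r ∈ C̄, the motif conductance φ_μ(C') of the corresponding 2-way partition P' = (C', C̄') of G equals cut(P) / d_w(C), where cut(P) is the (weighted) number of cut nets of P and d_w(C) is the weighted volume of C in H_μ, provided the motif enumeration is exact and d_μ(S) ≤ d_μ(S̄) in G. -/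
/-!
Since the contracted node `r` lies outside `C`, the cluster `C'` pulled back to `G` lies inside the
ball `S`, where the contraction is injective. Hence a motif meets `C'` in exactly as many nodes as
its net meets `C`, so `d_μ(C') = d_w(C)`; a motif crossing `C'` touches `S` and is therefore a cut
net of `(C, C̄)`; and `d_μ(C') ≤ d_μ(S) ≤ d_μ(S̄) ≤ d_μ(C̄')` selects `d_μ(C')` as the
minimum.
-/

open Finset

section MotifSums

variable {α : Type*} [DecidableEq α]

lemma sum_card_inter_mono (M : Finset (Finset α)) {A B : Finset α} (h : A ⊆ B) :
    ∑ m ∈ M, #(m ∩ A) ≤ ∑ m ∈ M, #(m ∩ B) :=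
  sum_le_sum fun _ _ => card_le_card (inter_subset_inter_left h)

lemma sum_card_inter_filter_meets {A S : Finset α} (M : Finset (Finset α)) (h : A ⊆ S) :
    ∑ m ∈ M.filter (fun m => (m ∩ S).Nonempty), #(m ∩ A) = ∑ m ∈ M, #(m ∩ A) := by
  refine sum_filter_of_ne fun m _ hm => ?_
  obtain ⟨x, hx⟩ := card_ne_zero.mp hm
  exact ⟨x, mem_inter.mpr ⟨(mem_inter.mp hx).1, h (mem_inter.mp hx).2⟩⟩

lemma card_image_inter_eq_card_inter {β : Type*} [DecidableEq β] {f : α → β} {A : Finset α}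
    {C : Finset β} (hA : ∀ x, x ∈ A ↔ f x ∈ C) (hf : Set.InjOn f A) (m : Finset α) :
    #(m.image f ∩ C) = #(m ∩ A) := by
  have himage : (m ∩ A).image f = m.image f ∩ C := by
    ext y
    simp only [mem_image, mem_inter, hA]
    constructor
    · rintro ⟨x, ⟨hx, hxC⟩, rfl⟩
      exact ⟨⟨x, hx, rfl⟩, hxC⟩
    · rintro ⟨⟨x, hx, rfl⟩, hxC⟩
      exact ⟨x, ⟨hx, hxC⟩, rfl⟩
  rw [← himage, card_image_of_injOn (hf.mono fun x hx => (mem_inter.mp hx).2)]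

end MotifSums

/-- `Sum.inr ()` is the node `r` into which everything outside the ball `S` is contracted. -/
def contract {V : Type*} [DecidableEq V] (S : Finset V) (v : V) : {v // v ∈ S} ⊕ Unit :=
  if h : v ∈ S then Sum.inl ⟨v, h⟩ else Sum.inr ()

lemma contract_injOn {V : Type*} [DecidableEq V] (S : Finset V) : Set.InjOn (contract S) S := by
  intro a ha b hb hab
  simp only [contract, dif_pos (mem_coe.mp ha), dif_pos (mem_coe.mp hb)] at hab
  exact congrArg Subtype.val (Sum.inl.inj hab)

lemma mem_of_contract_mem {V : Type*} [DecidableEq V] {S : Finset V}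
    {C : Finset ({v // v ∈ S} ⊕ Unit)}
    (hr : Sum.inr () ∉ C) {v : V} (hv : contract S v ∈ C) : v ∈ S := by
  by_contra h
  rw [contract, dif_neg h] at hv
  exact hr hv

open Classical in
/-- Conductance equivalence: for a 2-way partition `(C, C̄)` of the hypergraph
model `H_μ` with the contracted node `r ∈ C̄`, the motif conductance of the
corresponding cluster `C'` of `G` equals the ratio of the cut-net of the
model partition to the weighted volume of `C` in the model, assuming exact
motif enumeration and `d_μ(S) ≤ d_μ(S̄)`. -/
theorem stmt_6 {V : Type*} [Fintype V] [DecidableEq V]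
    (S : Finset V) (Mall M : Finset (Finset V))
    (hM : M = Mall.filter (fun m => (m ∩ S).Nonempty))
    (φ : V → ({v // v ∈ S} ⊕ Unit))
    (hφ : ∀ v, φ v = if h : v ∈ S then Sum.inl ⟨v, h⟩ else Sum.inr ())
    (C : Finset ({v // v ∈ S} ⊕ Unit)) (hr : Sum.inr () ∉ C)
    (C' : Finset V) (hC' : C' = Finset.univ.filter (fun v => φ v ∈ C))
    (dμ : Finset V → ℕ) (hdμ : ∀ A, dμ A = ∑ m ∈ Mall, (m ∩ A).card)
    (hball : dμ S ≤ dμ Sᶜ)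
    (cutP : ℕ)
    (hcut : cutP = (M.filter (fun m =>
        (∃ x ∈ m, φ x ∈ C) ∧ (∃ x ∈ m, φ x ∉ C))).card)
    (dw : ℕ) (hdw : dw = ∑ m ∈ M, ((m.image φ) ∩ C).card) :
    ((Mall.filter (fun m => (m ∩ C').Nonempty ∧ (m \ C').Nonempty)).card : ℝ)
        / min (dμ C') (dμ C'ᶜ)
      = (cutP : ℝ) / dw := by
  obtain rfl : φ = contract S := funext hφ
  have hmem : ∀ v, v ∈ C' ↔ contract S v ∈ C := by simp [hC']
  have hC'S : C' ⊆ S := fun v hv => mem_of_contract_mem hr ((hmem v).mp hv)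
  have hcross : Mall.filter (fun m => (m ∩ C').Nonempty ∧ (m \ C').Nonempty) =
      M.filter (fun m => (∃ x ∈ m, contract S x ∈ C) ∧ (∃ x ∈ m, contract S x ∉ C)) :=
    by
    ext m
    simp only [hM, mem_filter, Finset.Nonempty, mem_inter, mem_sdiff, hmem]
    constructor
    · rintro ⟨hm, ⟨x, hx, hxC⟩, y, hy, hyC⟩
      exact ⟨⟨hm, x, hx, hC'S ((hmem x).mpr hxC)⟩, ⟨x, hx, hxC⟩, y, hy, hyC⟩
    · rintro ⟨⟨hm, -⟩, ⟨x, hx, hxC⟩, y, hy, hyC⟩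
      exact ⟨hm, ⟨x, hx, hxC⟩, y, hy, hyC⟩
  have hvol : dμ C' = dw := by
    rw [hdμ, hdw, hM, ← sum_card_inter_filter_meets Mall hC'S]
    exact sum_congr rfl fun m _ =>
      (card_image_inter_eq_card_inter hmem ((contract_injOn S).mono hC'S) m).symm
  have hmin : dμ C' ≤ dμ C'ᶜ := by
    calc dμ C' ≤ dμ S := by simpa only [hdμ] using sum_card_inter_mono Mall hC'S
      _ ≤ dμ Sᶜ := hball
      _ ≤ dμ C'ᶜ := by
        simpa only [hdμ] using sum_card_inter_mono Mall (compl_subset_compl.mpr hC'S)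
  rw [hcross, ← hcut, min_eq_left hmin, hvol]
end

section
/- Assume the block-cardinality data structure keeps the k blocks sorted in ascending order of cardinality in array A. Then for an incoming node v, either the block at position 1 of A (the block of minimum cardinality) belongs to S_2 (the blocks with no incident uncut nets of v) and its index solves argmax over S_2 of the FREIGHT score (equivalently argmin of cardinality over S_2), or it belongs to S_1, in which case any solution of the restricted maximization over S_1 also solves the global maximization over S_1 ∪ S_2. -/
/-!
Since `x ↦ x ^ (γ - 1)` is monotone on `[0, ∞)`, the minimum-cardinality block `d` carries the
smallest penalty, so its score dominates that of every block with no more incident nets than `d`.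
If `I d = 0` these are exactly the blocks of `S₂`; if `I d > 0` they include all of `S₂`, so a
maximizer over `S₁`, which beats `d`, beats every block.
-/

lemma freight_penalty_le {α γ x y : ℝ} (hα : 0 ≤ α) (hγ : 1 ≤ γ) (hx : 0 ≤ x) (hxy : x ≤ y) :
    α * γ * x ^ (γ - 1) ≤ α * γ * y ^ (γ - 1) :=
  mul_le_mul_of_nonneg_left (Real.rpow_le_rpow hx hxy (by linarith)) (by positivity)

lemma freight_score_le {α γ a b x y : ℝ} (hα : 0 ≤ α) (hγ : 1 ≤ γ) (hba : b ≤ a)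
    (hx : 0 ≤ x) (hxy : x ≤ y) :
    b - α * γ * y ^ (γ - 1) ≤ a - α * γ * x ^ (γ - 1) :=
  sub_le_sub hba (freight_penalty_le hα hγ hx hxy)

/-- With the blocks kept sorted by cardinality, the block `d` of minimum
cardinality either lies in `S₂` (no incident relevant nets of `v`), in which
case it maximizes the FREIGHT score over `S₂`, or it lies in `S₁`, in which
case any maximizer of the FREIGHT score over `S₁` is a global maximizer. -/
theorem stmt_10 {k : ℕ} (I : Fin k → ℕ) (cardb : Fin k → ℝ)
    (hcard : ∀ i, 0 ≤ cardb i) (α γ : ℝ) (hα : 0 < α) (hγ : 1 < γ)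
    (score : Fin k → ℝ)
    (hscore : ∀ i, score i = (I i : ℝ) - α * γ * cardb i ^ (γ - 1))
    (d : Fin k) (hd : ∀ i, cardb d ≤ cardb i) :
    (I d = 0 ∧ ∀ i, I i = 0 → score i ≤ score d) ∨
    (0 < I d ∧ ∀ j, 0 < I j →
      (∀ i, 0 < I i → score i ≤ score j) → ∀ i, score i ≤ score j) := by
  have score_le_score_d : ∀ i, I i ≤ I d → score i ≤ score d := fun i hi => by
    rw [hscore, hscore]
    exact freight_score_le hα.le hγ.le (by exact_mod_cast hi) (hcard d) (hd i)
  rcases Nat.eq_zero_or_pos (I d) with hd0 | hd_pos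
  · exact .inl ⟨hd0, fun i hi => score_le_score_d i (by omega)⟩
  · refine .inr ⟨hd_pos, fun j _ hj_max i => ?_⟩
    rcases Nat.eq_zero_or_pos (I i) with hi0 | hi_pos
    · exact (score_le_score_d i (by omega)).trans (hj_max d hd_pos)
    · exact hj_max i hi_pos
end
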